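/- Two elements x and y of a continuous dcpo D are Hausdorff separated (there exist disjoint Scott open sets U ∋ x and V ∋ y) if and only if there exist a, b ∈ D with a ≪ x, b ≪ y and no z ∈ D satisfies both a ≪ z and b ≪ z. -/

import Mathlib

open Classical

def IsDcpo (D : Type*) [PartialOrder D] : Prop :=
  ∀ S : Set D, S.Nonempty → DirectedOn (· ≤ ·) S → ∃ s, IsLUB S s

def WayBelow {D : Type*} [PartialOrder D] (x y : D) : Prop :=
  ∀ S : Set D, S.Nonempty → DirectedOn (· ≤ ·) S →
    ∀ s, IsLUB S s → y ≤ s → ∃ a ∈ S, x ≤ a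

def ScottOpen {D : Type*} [PartialOrder D] (U : Set D) : Prop :=
  IsUpperSet U ∧ ∀ S : Set D, S.Nonempty → DirectedOn (· ≤ ·) S →
    ∀ s, IsLUB S s → s ∈ U → ∃ a ∈ S, a ∈ U

def ScottClosed {D : Type*} [PartialOrder D] (C : Set D) : Prop :=
  IsLowerSet C ∧ ∀ S : Set D, S.Nonempty → DirectedOn (· ≤ ·) S →
    S ⊆ C → ∀ s, IsLUB S s → s ∈ C

def IsBasis {D : Type*} [PartialOrder D] (B : Set D) : Prop :=
  ∀ x : D, (B ∩ {y | WayBelow y x}).Nonempty ∧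
    DirectedOn (· ≤ ·) (B ∩ {y | WayBelow y x}) ∧
    IsLUB (B ∩ {y | WayBelow y x}) x

def DcpoContinuous (D : Type*) [PartialOrder D] : Prop :=
  ∀ x : D, ({y | WayBelow y x} : Set D).Nonempty ∧
    DirectedOn (· ≤ ·) ({y | WayBelow y x} : Set D) ∧
    IsLUB ({y | WayBelow y x} : Set D) x

def DcpoAlgebraic (D : Type*) [PartialOrder D] : Prop :=
  ∀ x : D, ({c | WayBelow c c ∧ c ≤ x} : Set D).Nonempty ∧
    DirectedOn (· ≤ ·) ({c | WayBelow c c ∧ c ≤ x} : Set D) ∧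
    IsLUB ({c | WayBelow c c ∧ c ≤ x} : Set D) x

def HausdorffSep {D : Type*} [PartialOrder D] (x y : D) : Prop :=
  ∃ U V : Set D, ScottOpen U ∧ ScottOpen V ∧ x ∈ U ∧ y ∈ V ∧ U ∩ V = ∅

def StronglyMaximal {D : Type*} [PartialOrder D] (x : D) : Prop :=
  ∀ u v : D, WayBelow u v → WayBelow u x ∨ HausdorffSep v x

def Sharp {D : Type*} [PartialOrder D] (x : D) : Prop :=
  ∀ y z : D, WayBelow y z → WayBelow y x ∨ ∃ U : Set D, ScottOpen U ∧ z ∈ U ∧ x ∉ U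

noncomputable def step {D E : Type*} [PartialOrder D] [PartialOrder E] [OrderBot E]
    (x : D) (y : E) : D → E :=
  fun d => if x ≤ d then y else ⊥

/-! The sets `↟a = {z | a ≪ z}` are Scott open in a continuous dcpo (by interpolation), and every
Scott open neighbourhood of `x` contains some `a ≪ x`. So disjoint neighbourhoods of `x` and `y`
shrink to basic ones `↟a ∋ x`, `↟b ∋ y`, and `↟a ∩ ↟b = ∅` says exactly that `a` and `b` have no
common upper bound in the way-below relation. -/

section WayBelow

variable {D : Type*} [PartialOrder D]

theorem WayBelow.le {a x : D} (h : WayBelow a x) : a ≤ x := by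
  obtain ⟨c, hc, hac⟩ := h {x} (Set.singleton_nonempty x) (directedOn_singleton x) x
    isLUB_singleton le_rfl
  exact (Set.mem_singleton_iff.mp hc) ▸ hac

theorem WayBelow.mono_left {a b x : D} (hab : a ≤ b) (h : WayBelow b x) : WayBelow a x :=
  fun S hS hdir s hs hxs ↦
    let ⟨c, hc, hbc⟩ := h S hS hdir s hs hxs
    ⟨c, hc, hab.trans hbc⟩

theorem WayBelow.mono_right {a x y : D} (h : WayBelow a x) (hxy : x ≤ y) : WayBelow a y :=
  fun S hS hdir s hs hys ↦ h S hS hdir s hs (hxy.trans hys)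

theorem WayBelow.exists_between (hc : DcpoContinuous D) {a s : D} (h : WayBelow a s) :
    ∃ w, WayBelow a w ∧ WayBelow w s := by
  -- `s` is the directed sup of `T = ⋃ w ≪ s, {u | u ≪ w}`, so `a ≤ u` for some `u ≪ w ≪ s`
  set T : Set D := {u | ∃ w, WayBelow u w ∧ WayBelow w s}
  obtain ⟨⟨w₀, hw₀⟩, hdir_s, hlub_s⟩ := hc s
  obtain ⟨⟨u₀, hu₀⟩, -, -⟩ := hc w₀
  have hT_dir : DirectedOn (· ≤ ·) T := by
    rintro u₁ ⟨w₁, hu₁, hw₁⟩ u₂ ⟨w₂, hu₂, hw₂⟩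
    obtain ⟨w, hw, hw₁w, hw₂w⟩ := hdir_s w₁ hw₁ w₂ hw₂
    obtain ⟨u, hu, hu₁u, hu₂u⟩ := (hc w).2.1 u₁ (hu₁.mono_right hw₁w) u₂ (hu₂.mono_right hw₂w)
    exact ⟨u, ⟨w, hu, hw⟩, hu₁u, hu₂u⟩
  have hT_lub : IsLUB T s := by
    refine ⟨fun u ⟨w, hu, hw⟩ ↦ hu.le.trans hw.le, fun t ht ↦ hlub_s.2 fun w hw ↦ ?_⟩
    exact (hc w).2.2.2 fun u hu ↦ ht ⟨w, hu, hw⟩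
  obtain ⟨u, ⟨w, huw, hws⟩, hau⟩ := h T ⟨u₀, w₀, hu₀, hw₀⟩ hT_dir s hT_lub le_rfl
  exact ⟨w, huw.mono_left hau, hws⟩

theorem scottOpen_setOf_wayBelow (hc : DcpoContinuous D) (a : D) :
    ScottOpen {z | WayBelow a z} := by
  refine ⟨fun z z' hzz' hz ↦ WayBelow.mono_right hz hzz', fun S hS hdir s hs hmem ↦ ?_⟩
  obtain ⟨w, haw, hws⟩ := WayBelow.exists_between hc hmem
  obtain ⟨c, hcS, hwc⟩ := hws S hS hdir s hs le_rfl
  exact ⟨c, hcS, haw.mono_right hwc⟩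

theorem ScottOpen.exists_wayBelow_mem (hc : DcpoContinuous D) {U : Set D} (hU : ScottOpen U)
    {x : D} (hx : x ∈ U) : ∃ a, WayBelow a x ∧ a ∈ U :=
  let ⟨hne, hdir, hlub⟩ := hc x
  hU.2 _ hne hdir x hlub hx

end WayBelow

theorem stmt15_general {D : Type*} [PartialOrder D]
    (hc : DcpoContinuous D) (x y : D) :
    HausdorffSep x y ↔
      ∃ a b : D, WayBelow a x ∧ WayBelow b y ∧
        ¬ ∃ z : D, WayBelow a z ∧ WayBelow b z := by
  constructor
  · rintro ⟨U, V, hU, hV, hxU, hyV, hUV⟩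
    obtain ⟨a, hax, haU⟩ := hU.exists_wayBelow_mem hc hxU
    obtain ⟨b, hby, hbV⟩ := hV.exists_wayBelow_mem hc hyV
    refine ⟨a, b, hax, hby, fun ⟨z, haz, hbz⟩ ↦ ?_⟩
    have hz : z ∈ U ∩ V := ⟨hU.1 haz.le haU, hV.1 hbz.le hbV⟩
    simp [hUV] at hz
  · rintro ⟨a, b, hax, hby, hab⟩
    refine ⟨_, _, scottOpen_setOf_wayBelow hc a, scottOpen_setOf_wayBelow hc b, hax, hby, ?_⟩
    exact Set.eq_empty_of_forall_notMem fun z hz ↦ hab ⟨z, hz⟩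

theorem stmt15 {D : Type*} [PartialOrder D] (hD : IsDcpo D)
    (hc : DcpoContinuous D) (x y : D) :
    HausdorffSep x y ↔
      ∃ a b : D, WayBelow a x ∧ WayBelow b y ∧
        ¬ ∃ z : D, WayBelow a z ∧ WayBelow b z :=
  stmt15_general hc x y
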